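/- arXiv:0901.4223 — 6 statements merged into one kernel-verified Lean document; each statement's English description precedes it below -/
import Mathlib

section
/- Let b, s, t be complex numbers with Re s > 0, Re t > 0 and Re(b + s + t) < 0. Then the double integral ∫_0^∞ ∫_0^∞ (1 + v + z)^b · v^{s−1} · z^{t−1} dv dz equals Γ(s) Γ(t) Γ(−b−s−t) / Γ(−b). -/
/-!
The substitution `x = u / (1 - u)` turns the Mellin transform of `(1 + x) ^ b` at `s` into the
beta integral `B(s, -b - s) = Γ(s) Γ(-b - s) / Γ(-b)`, and the scaling `x ↦ a x` gives the Mellin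
transform `a ^ (b + s) Γ(s) Γ(-b - s) / Γ(-b)` of `(a + x) ^ b`. By Fubini, the inner integral over
`z` is the Mellin transform of `(1 + v + z) ^ b` at `t`, namely a multiple of `(1 + v) ^ (b + t)`,
and the outer integral over `v` is the Mellin transform of that at `s`. Integrability on the
quadrant follows from the same computation for the absolute values, which only see real parts.
-/

open MeasureTheory Set Complex

theorem ofReal_cpow_def_of_pos {x : ℝ} (hx : 0 < x) (y : ℂ) :
    (x : ℂ) ^ y = exp (Real.log x * y) := by
  rw [cpow_def_of_ne_zero (ofReal_ne_zero.mpr hx.ne'), ofReal_log hx.le]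

section DivOneSub

theorem image_div_one_sub_Ioo : (fun u : ℝ => u / (1 - u)) '' Ioo 0 1 = Ioi 0 := by
  ext x
  constructor
  · rintro ⟨u, ⟨hu0, hu1⟩, rfl⟩
    exact div_pos hu0 (sub_pos.mpr hu1)
  · intro hx
    have hx : 0 < x := hx
    refine ⟨x / (1 + x), ⟨by positivity, (div_lt_one (by positivity)).mpr (by linarith)⟩, ?_⟩
    field_simp
    ring

theorem injOn_div_one_sub : InjOn (fun u : ℝ => u / (1 - u)) (Ioo 0 1) := by
  intro u hu w hw h
  have := sub_pos.mpr hu.2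
  have := sub_pos.mpr hw.2
  simp only at h
  field_simp at h
  linarith

theorem hasDerivAt_div_one_sub {u : ℝ} (hu : u ≠ 1) :
    HasDerivAt (fun u : ℝ => u / (1 - u)) ((1 - u) ^ 2)⁻¹ u := by
  have hu' : 1 - u ≠ 0 := sub_ne_zero.mpr hu.symm
  refine ((hasDerivAt_id' u).div ((hasDerivAt_const u 1).sub (hasDerivAt_id' u)) hu').congr_deriv ?_
  simp only [Pi.sub_apply]
  field_simp
  ring

variable {E : Type*} [NormedAddCommGroup E] [NormedSpace ℝ E]

theorem integrableOn_Ioi_iff_comp_div_one_sub (g : ℝ → E) :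
    IntegrableOn g (Ioi 0) ↔
      IntegrableOn (fun u => ((1 - u) ^ 2)⁻¹ • g (u / (1 - u))) (Ioo 0 1) := by
  have := integrableOn_image_iff_integrableOn_abs_deriv_smul measurableSet_Ioo
    (fun u hu => (hasDerivAt_div_one_sub hu.2.ne).hasDerivWithinAt) injOn_div_one_sub g
  simpa only [image_div_one_sub_Ioo, abs_inv, abs_sq] using this

theorem integral_Ioi_eq_integral_comp_div_one_sub (g : ℝ → E) :
    ∫ x in Ioi 0, g x = ∫ u in Ioo 0 1, ((1 - u) ^ 2)⁻¹ • g (u / (1 - u)) := by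
  have := integral_image_eq_integral_abs_deriv_smul measurableSet_Ioo
    (fun u hu => (hasDerivAt_div_one_sub hu.2.ne).hasDerivWithinAt) injOn_div_one_sub g
  simpa only [image_div_one_sub_Ioo, abs_inv, abs_sq] using this

end DivOneSub

section MellinOneAddCpow

theorem inv_sq_smul_cpow_smul_one_add_cpow {u : ℝ} (hu : u ∈ Ioo 0 1) (b s : ℂ) :
    ((1 - u) ^ 2)⁻¹ • (((u / (1 - u) : ℝ) : ℂ) ^ (s - 1) • ((1 + u / (1 - u) : ℝ) : ℂ) ^ b) =
      (u : ℂ) ^ (s - 1) * (1 - (u : ℂ)) ^ (-b - s - 1) := by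
  obtain ⟨hu0, hu1⟩ := hu
  have hv : 0 < 1 - u := sub_pos.mpr hu1
  have h1 : 1 + u / (1 - u) = (1 - u)⁻¹ := by field_simp; ring
  have h2 : ((((1 - u) ^ 2)⁻¹ : ℝ) : ℂ) = ((1 - u : ℝ) : ℂ) ^ (-2 : ℂ) := by
    rw [cpow_neg, cpow_ofNat]; push_cast; rfl
  rw [real_smul, h2, h1, smul_eq_mul, ← ofReal_one, ← ofReal_sub]
  simp only [ofReal_cpow_def_of_pos, hu0, hv, div_pos, inv_pos, ← exp_add]
  congr 1
  rw [Real.log_div hu0.ne' hv.ne', Real.log_inv]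
  push_cast
  ring

theorem hasMellin_one_add_cpow {b s : ℂ} (hs : 0 < s.re) (hbs : (b + s).re < 0) :
    HasMellin (fun x : ℝ => ((1 + x : ℝ) : ℂ) ^ b) s (Gamma s * Gamma (-b - s) / Gamma (-b)) := by
  have hbs' : 0 < (-b - s).re := by simp only [sub_re, neg_re, add_re] at hbs ⊢; linarith
  have hbeta : IntegrableOn (fun u : ℝ => (u : ℂ) ^ (s - 1) * (1 - (u : ℂ)) ^ (-b - s - 1))
      (Ioo 0 1) :=
    (intervalIntegrable_iff_integrableOn_Ioo_of_le zero_le_one).mp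
      (betaIntegral_convergent hs hbs')
  have hsubst : EqOn (fun u : ℝ => ((1 - u) ^ 2)⁻¹ •
      (((u / (1 - u) : ℝ) : ℂ) ^ (s - 1) • ((1 + u / (1 - u) : ℝ) : ℂ) ^ b))
      (fun u : ℝ => (u : ℂ) ^ (s - 1) * (1 - (u : ℂ)) ^ (-b - s - 1)) (Ioo 0 1) :=
    fun u hu => inv_sq_smul_cpow_smul_one_add_cpow hu b s
  constructor
  · rw [MellinConvergent, integrableOn_Ioi_iff_comp_div_one_sub]
    exact (integrableOn_congr_fun hsubst measurableSet_Ioo).mpr hbeta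
  · rw [mellin, integral_Ioi_eq_integral_comp_div_one_sub,
      setIntegral_congr_fun measurableSet_Ioo hsubst, ← integral_Ioc_eq_integral_Ioo,
      ← intervalIntegral.integral_of_le zero_le_one, ← betaIntegral,
      betaIntegral_eq_Gamma_mul_div _ _ hs hbs', add_sub_cancel]

theorem cpow_smul_add_cpow_comp_mul_left {a x : ℝ} (ha : 0 < a) (hx : 0 < x) (b s : ℂ) :
    ((a * x : ℝ) : ℂ) ^ (s - 1) • ((a + a * x : ℝ) : ℂ) ^ b =
      (a : ℂ) ^ (b + s - 1) * ((x : ℂ) ^ (s - 1) • ((1 + x : ℝ) : ℂ) ^ b) := by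
  have h1x : 0 < 1 + x := by positivity
  rw [show a + a * x = a * (1 + x) by ring, smul_eq_mul, smul_eq_mul]
  simp only [ofReal_cpow_def_of_pos, ha, hx, h1x, mul_pos, ← exp_add]
  congr 1
  rw [Real.log_mul ha.ne' hx.ne', Real.log_mul ha.ne' h1x.ne']
  push_cast
  ring

variable {a : ℝ}

theorem hasMellin_add_cpow (ha : 0 < a) {b s : ℂ} (hs : 0 < s.re) (hbs : (b + s).re < 0) :
    HasMellin (fun x : ℝ => ((a + x : ℝ) : ℂ) ^ b) s
      ((a : ℂ) ^ (b + s) * (Gamma s * Gamma (-b - s) / Gamma (-b))) := by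
  obtain ⟨hconv, hval⟩ := hasMellin_one_add_cpow hs hbs
  have hscale : EqOn (fun x : ℝ => ((a * x : ℝ) : ℂ) ^ (s - 1) • ((a + a * x : ℝ) : ℂ) ^ b)
      (fun x : ℝ => (a : ℂ) ^ (b + s - 1) * ((x : ℂ) ^ (s - 1) • ((1 + x : ℝ) : ℂ) ^ b))
      (Ioi 0) :=
    fun x hx => cpow_smul_add_cpow_comp_mul_left ha hx b s
  constructor
  · have := integrableOn_Ioi_comp_mul_left_iff
      (fun x : ℝ => (x : ℂ) ^ (s - 1) • ((a + x : ℝ) : ℂ) ^ b) 0 ha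
    rw [mul_zero] at this
    rw [MellinConvergent, ← this, integrableOn_congr_fun hscale measurableSet_Ioi]
    exact hconv.const_mul _
  · have := integral_comp_mul_left_Ioi'
      (fun x : ℝ => (x : ℂ) ^ (s - 1) • ((a + x : ℝ) : ℂ) ^ b) 0 ha
    rw [mul_zero] at this
    have ha' : (a : ℂ) ≠ 0 := ofReal_ne_zero.mpr ha.ne'
    rw [mellin, ← this, setIntegral_congr_fun measurableSet_Ioi hscale, integral_const_mul,
      ← mellin, hval, real_smul, ← mul_assoc, cpow_sub _ _ ha', cpow_one]
    field_simp

theorem integral_norm_cpow_smul_add_cpow (ha : 0 < a) (b s : ℂ) :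
    ∫ x : ℝ in Ioi 0, ‖(x : ℂ) ^ (s - 1) • ((a + x : ℝ) : ℂ) ^ b‖ =
      a ^ (b + s).re * ∫ x : ℝ in Ioi 0, ‖(x : ℂ) ^ (s - 1) • ((1 + x : ℝ) : ℂ) ^ b‖ := by
  have := integral_comp_mul_left_Ioi'
    (fun x : ℝ => ‖(x : ℂ) ^ (s - 1) • ((a + x : ℝ) : ℂ) ^ b‖) 0 ha
  rw [mul_zero] at this
  rw [← this, setIntegral_congr_fun measurableSet_Ioi
      (fun x hx => congrArg norm (cpow_smul_add_cpow_comp_mul_left ha hx b s)),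
    integral_congr_ae (ae_of_all _ fun x => norm_mul _ _), integral_const_mul,
    norm_cpow_eq_rpow_re_of_pos ha, smul_eq_mul, sub_re, one_re, Real.rpow_sub_one ha.ne']
  field_simp

end MellinOneAddCpow

section DoubleMellin

variable {b s t : ℂ}

theorem integrableOn_double_mellin_integrand (hs : 0 < s.re) (ht : 0 < t.re)
    (hb : (b + s + t).re < 0) :
    IntegrableOn
      (fun p : ℝ × ℝ => (p.1 : ℂ) ^ (s - 1) * ((p.2 : ℂ) ^ (t - 1) • ((1 + p.1 + p.2 : ℝ) : ℂ) ^ b))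
      (Ioi 0 ×ˢ Ioi 0) := by
  have hbt : (b + t).re < 0 := by simp only [add_re] at hb ⊢; linarith
  have hbts : (b + t + s).re < 0 := by simp only [add_re] at hb ⊢; linarith
  rw [IntegrableOn, Measure.volume_eq_prod, ← Measure.prod_restrict,
    integrable_prod_iff (by fun_prop : Measurable _).aestronglyMeasurable]
  constructor
  · refine ae_restrict_of_forall_mem measurableSet_Ioi fun v hv => ?_
    exact (hasMellin_add_cpow (a := 1 + v) (by linarith [mem_Ioi.mp hv]) ht hbt).1.const_mul
      ((v : ℂ) ^ (s - 1))
  · refine ((hasMellin_one_add_cpow hs hbts).1.norm.const_mul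
      (∫ z : ℝ in Ioi 0, ‖(z : ℂ) ^ (t - 1) • ((1 + z : ℝ) : ℂ) ^ b‖)).congr ?_
    filter_upwards [ae_restrict_mem measurableSet_Ioi] with v hv
    have hv1 : 0 < 1 + v := by linarith [mem_Ioi.mp hv]
    simp only [norm_mul, integral_const_mul]
    rw [integral_norm_cpow_smul_add_cpow hv1, norm_smul, norm_cpow_eq_rpow_re_of_pos hv1]
    ring

theorem integral_double_mellin_integrand_slice (ht : 0 < t.re) (hbt : (b + t).re < 0) {v : ℝ}
    (hv : 0 < v) :
    ∫ z : ℝ in Ioi 0, (v : ℂ) ^ (s - 1) * ((z : ℂ) ^ (t - 1) • ((1 + v + z : ℝ) : ℂ) ^ b) =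
      (v : ℂ) ^ (s - 1) • ((1 + v : ℝ) : ℂ) ^ (b + t) *
        (Gamma t * Gamma (-b - t) / Gamma (-b)) := by
  rw [integral_const_mul, ← mellin, (hasMellin_add_cpow (by linarith) ht hbt).2, smul_eq_mul,
    mul_assoc]

end DoubleMellin

theorem double_mellin_integral (b s t : ℂ) (hs : 0 < s.re) (ht : 0 < t.re)
    (hb : (b + s + t).re < 0) :
    ∫ p in Set.Ioi (0 : ℝ) ×ˢ Set.Ioi (0 : ℝ),
        ((1 + p.1 + p.2 : ℝ) : ℂ) ^ b * ((p.1 : ℝ) : ℂ) ^ (s - 1) * ((p.2 : ℝ) : ℂ) ^ (t - 1) =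
      Complex.Gamma s * Complex.Gamma t * Complex.Gamma (-b - s - t) / Complex.Gamma (-b) := by
  have hbt : (b + t).re < 0 := by simp only [add_re] at hb ⊢; linarith
  have hbts : (b + t + s).re < 0 := by simp only [add_re] at hb ⊢; linarith
  have hΓ : Gamma (-b - t) ≠ 0 :=
    Gamma_ne_zero_of_re_pos (by simp only [sub_re, neg_re, add_re] at hbt ⊢; linarith)
  have hf : (fun p : ℝ × ℝ =>
        ((1 + p.1 + p.2 : ℝ) : ℂ) ^ b * (p.1 : ℂ) ^ (s - 1) * (p.2 : ℂ) ^ (t - 1)) =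
      fun p => (p.1 : ℂ) ^ (s - 1) * ((p.2 : ℂ) ^ (t - 1) • ((1 + p.1 + p.2 : ℝ) : ℂ) ^ b) := by
    ext p
    rw [smul_eq_mul]
    ring
  rw [hf, Measure.volume_eq_prod,
    setIntegral_prod _ (integrableOn_double_mellin_integrand hs ht hb),
    setIntegral_congr_fun measurableSet_Ioi
      fun v hv => integral_double_mellin_integrand_slice ht hbt hv,
    integral_mul_const, ← mellin, (hasMellin_one_add_cpow hs hbts).2,
    show -(b + t) - s = -b - s - t by ring, show -(b + t) = -b - t by ring]
  field_simp
end

section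
/- Let d and a be complex numbers with Re d > 0 and Re a < (1 − Re d)/2. Then ∫_0^∞ (cosh t)^{2a} · (sinh t)^{d−1} dt = Γ(d/2) · Γ(1/2 − a − d/2) / (2 Γ(1/2 − a)). -/
/-!
The substitution `x = tanh² t` maps `(0, ∞)` onto `(0, 1)`, with `dx = 2 tanh t sech² t dt` and
`1 - x = sech² t`. It turns the Beta integral `B(u, v) = ∫₀¹ x^(u-1) (1-x)^(v-1) dx` into
`2 ∫₀^∞ cosh^(1-2(u+v)) t · sinh^(2u-1) t dt`. Taking `u = d/2`, `v = 1/2 - a - d/2` (both of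
positive real part) and `B(u, v) = Γ(u) Γ(v) / Γ(u + v)` gives the formula.
-/

open MeasureTheory Set

namespace Real

theorem tanh_pos {t : ℝ} (ht : 0 < t) : 0 < tanh t := by
  rw [tanh_eq_sinh_div_cosh]
  exact div_pos (sinh_pos_iff.2 ht) (cosh_pos t)

theorem one_sub_tanh_sq (t : ℝ) : 1 - tanh t ^ 2 = (cosh t)⁻¹ ^ 2 := by
  have hc : cosh t ≠ 0 := (cosh_pos t).ne'
  rw [tanh_eq_sinh_div_cosh]
  field_simp
  linarith [cosh_sq_sub_sinh_sq t]

theorem hasDerivAt_tanh (t : ℝ) : HasDerivAt tanh ((cosh t)⁻¹ ^ 2) t := by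
  have hc : cosh t ≠ 0 := (cosh_pos t).ne'
  have h := (hasDerivAt_sinh t).div (hasDerivAt_cosh t) hc
  rw [show sinh / cosh = tanh from funext fun x => (tanh_eq_sinh_div_cosh x).symm] at h
  refine h.congr_deriv ?_
  field_simp
  linarith [cosh_sq_sub_sinh_sq t]

theorem injOn_tanh_sq : InjOn (fun t => tanh t ^ 2) (Ioi 0) := fun _ hs _ ht hst =>
  tanh_injective <| (pow_left_inj₀ (tanh_pos hs).le (tanh_pos ht).le two_ne_zero).1 hst

theorem image_tanh_sq_Ioi : (fun t => tanh t ^ 2) '' Ioi 0 = Ioo 0 1 := by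
  ext y
  constructor
  · rintro ⟨t, ht, rfl⟩
    exact ⟨pow_pos (tanh_pos ht) 2, tanh_sq_lt_one t⟩
  · rintro ⟨hy0, hy1⟩
    have hsqrt : √y ∈ Ioo 0 1 := ⟨sqrt_pos.2 hy0, (sqrt_lt' one_pos).2 (by rwa [one_pow])⟩
    refine ⟨artanh √y, artanh_pos hsqrt, ?_⟩
    simp only [tanh_artanh ⟨by linarith [hsqrt.1], hsqrt.2⟩, sq_sqrt hy0.le]

end Real

open Real

theorem integral_Ioo_zero_one_eq_integral_Ioi_tanh_sq {E : Type*} [NormedAddCommGroup E]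
    [NormedSpace ℝ E] (g : ℝ → E) :
    ∫ x in Ioo 0 1, g x = ∫ t in Ioi 0, (2 * tanh t * (cosh t)⁻¹ ^ 2) • g (tanh t ^ 2) := by
  have hderiv (t : ℝ) : HasDerivAt (fun t => tanh t ^ 2) (2 * tanh t * (cosh t)⁻¹ ^ 2) t := by
    simpa using (hasDerivAt_tanh t).fun_pow 2
  rw [← image_tanh_sq_Ioi, integral_image_eq_integral_abs_deriv_smul measurableSet_Ioi
    (fun t _ => (hderiv t).hasDerivWithinAt) injOn_tanh_sq]
  refine setIntegral_congr_fun measurableSet_Ioi fun t ht => ?_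
  rw [abs_of_pos (by have := tanh_pos ht; positivity)]

namespace Complex

theorem ofReal_sq_cpow {x : ℝ} (hx : 0 ≤ x) (w : ℂ) :
    ((x ^ 2 : ℝ) : ℂ) ^ w = (x : ℂ) ^ (2 * w) := by
  simpa using (cpow_mul_ofReal_nonneg hx 2 w).symm

theorem smul_sq_cpow_mul_sq_cpow {x y : ℝ} (hx : 0 < x) (hy : 0 < y) (u v : ℂ) :
    (2 * (x * y) * y ^ 2 : ℝ) • ((((x * y) ^ 2 : ℝ) : ℂ) ^ (u - 1) * ((y ^ 2 : ℝ) : ℂ) ^ (v - 1)) =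
      2 * ((y : ℂ) ^ (2 * (u + v) - 1) * (x : ℂ) ^ (2 * u - 1)) := by
  have hx0 : (x : ℂ) ≠ 0 := ofReal_ne_zero.2 hx.ne'
  have hy0 : (y : ℂ) ≠ 0 := ofReal_ne_zero.2 hy.ne'
  rw [ofReal_sq_cpow (by positivity), ofReal_sq_cpow hy.le, ofReal_mul,
    mul_cpow_ofReal_nonneg hx.le hy.le,
    show 2 * (u + v) - 1 = 2 * (u - 1) + 2 * (v - 1) + 3 by ring,
    show 2 * u - 1 = 2 * (u - 1) + 1 by ring, cpow_add _ _ hx0, cpow_add _ _ hy0,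
    cpow_add _ _ hy0, cpow_one, cpow_ofNat, real_smul]
  push_cast
  ring

theorem betaIntegral_eq_two_mul_integral_cosh_cpow_mul_sinh_cpow (u v : ℂ) :
    betaIntegral u v =
      2 * ∫ t in Ioi (0 : ℝ),
        ((Real.cosh t : ℝ) : ℂ) ^ (1 - 2 * (u + v)) * ((Real.sinh t : ℝ) : ℂ) ^ (2 * u - 1) := by
  rw [betaIntegral, intervalIntegral.integral_of_le zero_le_one, integral_Ioc_eq_integral_Ioo,
    integral_Ioo_zero_one_eq_integral_Ioi_tanh_sq, ← integral_const_mul]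
  refine setIntegral_congr_fun measurableSet_Ioi fun t ht => ?_
  have hcosh_inv : 0 < (Real.cosh t)⁻¹ := inv_pos.2 (Real.cosh_pos t)
  have hsub : 1 - ((Real.tanh t ^ 2 : ℝ) : ℂ) = (((Real.cosh t)⁻¹ ^ 2 : ℝ) : ℂ) := by
    rw [← Real.one_sub_tanh_sq, ofReal_sub, ofReal_one]
  rw [hsub, Real.tanh_eq_sinh_div_cosh, div_eq_mul_inv,
    smul_sq_cpow_mul_sq_cpow (Real.sinh_pos_iff.2 ht) hcosh_inv, ofReal_inv,
    inv_cpow_ofReal_nonneg (Real.cosh_pos t).le, ← cpow_neg, neg_sub]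

end Complex

theorem integral_cosh_cpow_mul_sinh_cpow (d a : ℂ) (hd : 0 < d.re)
    (ha : a.re < (1 - d.re) / 2) :
    ∫ t in Set.Ioi (0 : ℝ),
        ((Real.cosh t : ℝ) : ℂ) ^ (2 * a) * ((Real.sinh t : ℝ) : ℂ) ^ (d - 1) =
      Complex.Gamma (d / 2) * Complex.Gamma (1 / 2 - a - d / 2) /
        (2 * Complex.Gamma (1 / 2 - a)) := by
  have hu : 0 < (d / 2).re := by rw [Complex.div_ofNat_re]; positivity
  have hv : 0 < (1 / 2 - a - d / 2).re := by
    simp only [Complex.sub_re, Complex.div_ofNat_re, Complex.one_re]; linarith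
  have hbeta := Complex.betaIntegral_eq_two_mul_integral_cosh_cpow_mul_sinh_cpow (d / 2)
    (1 / 2 - a - d / 2)
  rw [Complex.betaIntegral_eq_Gamma_mul_div _ _ hu hv] at hbeta
  rw [show d / 2 + (1 / 2 - a - d / 2) = 1 / 2 - a by ring,
    show 1 - 2 * (1 / 2 - a) = 2 * a by ring, show 2 * (d / 2) - 1 = d - 1 by ring] at hbeta
  rw [mul_comm 2 (Complex.Gamma _), ← div_div, hbeta, mul_div_cancel_left₀ _ two_ne_zero]
end

section
/- Let μ, λ be complex numbers with Re λ > −1 and Re(μ+λ) < 0, and let z be a real number with 1 < z < 3. Then ∫_1^z (z−y)^{−μ−λ−1} (y²−1)^λ dy = 2^λ Γ(λ+1) Γ(−μ−λ) (z−1)^{−μ} · ∑_{n=0}^∞ ((z−1)/2)^n · Γ(λ+n+1) / ( Γ(λ−n+1) Γ(1−μ+n) n! ), where 1/Γ(λ−n+1) and 1/Γ(1−μ+n) denote the entire reciprocal Gamma function and the series converges absolutely. -/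
/-!
Since `1 < y < 3`, the factor `(y + 1) ^ λ = 2 ^ λ (1 + (y - 1) / 2) ^ λ` of `(y² - 1) ^ λ` is
given by a convergent binomial series, so the integrand is a series of terms
`2 ^ (λ - n) C(λ, n) (y - 1) ^ (λ + n) (z - y) ^ (-μ - λ - 1)`. Each term integrates to a Beta
integral, and `Γ(λ + 1) / Γ(λ - n + 1) = n! C(λ, n)` turns the result into the `n`-th term of
the right-hand side. Termwise integration is dominated convergence: up to a constant, the
`n`-th term is bounded by `|C(λ, n)| ((z - 1) / 2) ^ n` times the integrable function
`|(y - 1) ^ λ (z - y) ^ (-μ - λ - 1)|`, and the same bound gives the absolute convergence of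
the series.
-/

open MeasureTheory Set
open scoped Nat

namespace Complex

theorem hasSum_choose_mul_pow (a : ℂ) {x : ℂ} (hx : ‖x‖ < 1) :
    HasSum (fun n ↦ Ring.choose a n * x ^ n) ((1 + x) ^ a) := by
  have hx' : x ∈ Metric.eball (0 : ℂ) 1 := by
    rw [← ENNReal.ofReal_one, Metric.eball_ofReal]
    simpa using hx
  simpa [binomialSeries, FormalMultilinearSeries.ofScalars_apply_eq, mul_comm] using
    one_add_cpow_hasFPowerSeriesOnBall_zero.hasSum hx'

theorem summable_norm_choose_mul_pow (a : ℂ) {r : ℝ} (hr0 : 0 ≤ r) (hr : r < 1) :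
    Summable fun n ↦ ‖Ring.choose a n‖ * r ^ n := by
  lift r to NNReal using hr0
  have h := (binomialSeries ℂ a).summable_norm_mul_pow
    (lt_of_lt_of_le (by exact_mod_cast hr) binomialSeries_radius_ge_one)
  simpa [binomialSeries, FormalMultilinearSeries.ofScalars_norm] using h

theorem Gamma_add_one_div_Gamma_sub_natCast_add_one {a : ℂ} (ha : Gamma (a + 1) ≠ 0) (n : ℕ) :
    Gamma (a + 1) / Gamma (a - n + 1) = n ! * Ring.choose a n := by
  rw [← nsmul_eq_mul, ← Ring.descPochhammer_eq_factorial_smul_choose]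
  induction n with
  | zero => simp [ha]
  | succ n ih =>
    rw [descPochhammer_succ_right, Polynomial.smeval_mul, ← ih,
      show a - (n + 1 : ℕ) + 1 = a - n by push_cast; ring]
    simp only [Polynomial.smeval_sub, Polynomial.smeval_X, Polynomial.smeval_natCast, pow_one,
      nsmul_eq_mul, pow_zero, mul_one]
    rcases eq_or_ne (a - n) 0 with h | h
    · simp [h] -- both sides vanish, as Mathlib sets `Gamma 0 = 0`
    · rw [Gamma_add_one _ h]
      field_simp

theorem intervalIntegrable_sub_cpow_mul_sub_cpow {p q : ℝ} (hpq : p < q) {s t : ℂ}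
    (hs : -1 < s.re) (ht : -1 < t.re) :
    IntervalIntegrable (fun y : ℝ ↦ ((y - p : ℝ) : ℂ) ^ s * ((q - y : ℝ) : ℂ) ^ t) volume p q := by
  obtain ⟨m, hpm, hmq⟩ := exists_between hpq
  have hleft : IntervalIntegrable (fun y : ℝ ↦ ((y - p : ℝ) : ℂ) ^ s) volume p m := by
    simpa using
      (intervalIntegral.intervalIntegrable_cpow' (a := 0) (b := m - p) hs).comp_sub_right p
  have hright : IntervalIntegrable (fun y : ℝ ↦ ((q - y : ℝ) : ℂ) ^ t) volume m q := by
    simpa using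
      (intervalIntegral.intervalIntegrable_cpow' (a := q - m) (b := 0) ht).comp_sub_left q
  refine (hleft.mul_continuousOn ?_).trans (hright.continuousOn_mul ?_)
  · refine ContinuousOn.cpow_const (by fun_prop) fun y hy ↦ ofReal_mem_slitPlane.2 ?_
    rw [uIcc_of_le hpm.le] at hy
    linarith [hy.2]
  · refine ContinuousOn.cpow_const (by fun_prop) fun y hy ↦ ofReal_mem_slitPlane.2 ?_
    rw [uIcc_of_le hmq.le] at hy
    linarith [hy.1]

theorem integral_sub_cpow_mul_sub_cpow {p q : ℝ} (hpq : p < q) {s t : ℂ}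
    (hs : 0 < s.re) (ht : 0 < t.re) :
    ∫ y in p..q, ((y - p : ℝ) : ℂ) ^ (s - 1) * ((q - y : ℝ) : ℂ) ^ (t - 1) =
      ((q - p : ℝ) : ℂ) ^ (s + t - 1) * (Gamma s * Gamma t / Gamma (s + t)) := by
  rw [← betaIntegral_eq_Gamma_mul_div s t hs ht, ← betaIntegral_scaled s t (sub_pos.2 hpq),
    ← sub_self p, ← intervalIntegral.integral_comp_sub_right]
  congr! 4 with y
  push_cast
  ring

end Complex

namespace intervalIntegral

variable {E : Type*} [NormedAddCommGroup E] [NormedSpace ℝ E] {a b : ℝ} {F : ℕ → ℝ → E}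
  {c : ℕ → ℝ} {g : ℝ → ℝ}

theorem hasSum_integral_of_norm_le_mul {f : ℝ → E} (hab : a ≤ b)
    (hF : ∀ n, IntervalIntegrable (F n) volume a b) (hc : Summable c)
    (hg : IntervalIntegrable g volume a b) (hbound : ∀ n, ∀ y ∈ Ioc a b, ‖F n y‖ ≤ c n * g y)
    (hlim : ∀ y ∈ Ioc a b, HasSum (F · y) (f y)) :
    HasSum (fun n ↦ ∫ y in a..b, F n y) (∫ y in a..b, f y) := by
  rw [← uIoc_of_le hab] at hbound hlim
  refine hasSum_integral_of_dominated_convergence (fun n y ↦ c n * g y)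
    (fun n ↦ (hF n).def'.aestronglyMeasurable) (fun n ↦ .of_forall (hbound n))
    (.of_forall fun y _ ↦ hc.mul_right (g y)) ?_ (.of_forall hlim)
  simpa only [tsum_mul_right] using hg.const_mul (∑' n, c n)

theorem summable_norm_integral_of_norm_le_mul (hab : a ≤ b) (hc : Summable c)
    (hg : IntervalIntegrable g volume a b) (hbound : ∀ n, ∀ y ∈ Ioc a b, ‖F n y‖ ≤ c n * g y) :
    Summable fun n ↦ ‖∫ y in a..b, F n y‖ := by
  refine .of_nonneg_of_le (fun n ↦ norm_nonneg _) (fun n ↦ ?_) (hc.mul_right (∫ y in a..b, g y))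
  rw [← integral_const_mul]
  exact norm_integral_le_of_norm_le hab (.of_forall (hbound n)) (hg.const_mul (c n))

end intervalIntegral

open Complex

theorem hasSum_sq_sub_one_cpow (a : ℂ) {y : ℝ} (hy1 : 1 < y) (hy3 : y < 3) :
    HasSum (fun n : ℕ ↦ 2 ^ a * Ring.choose a n / 2 ^ n * ((y - 1 : ℝ) : ℂ) ^ (a + n))
      (((y ^ 2 - 1 : ℝ) : ℂ) ^ a) := by
  have hw : ‖(((y - 1) / 2 : ℝ) : ℂ)‖ < 1 := by
    rw [norm_real, Real.norm_of_nonneg (by linarith)]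
    linarith
  have hfactor : ((y ^ 2 - 1 : ℝ) : ℂ) ^ a =
      2 ^ a * (1 + (((y - 1) / 2 : ℝ) : ℂ)) ^ a * ((y - 1 : ℝ) : ℂ) ^ a := by
    rw [show ((y ^ 2 - 1 : ℝ) : ℂ) = ((2 * (1 + (y - 1) / 2) : ℝ) : ℂ) * ((y - 1 : ℝ) : ℂ) by
        push_cast; ring,
      mul_cpow_ofReal_nonneg (by linarith) (by linarith), ofReal_mul,
      mul_cpow_ofReal_nonneg (by norm_num) (by linarith)]
    push_cast
    rfl
  rw [hfactor]
  refine (((hasSum_choose_mul_pow a hw).mul_left (2 ^ a)).mul_right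
    (((y - 1 : ℝ) : ℂ) ^ a)).congr_fun fun n ↦ ?_
  have hy : ((y - 1 : ℝ) : ℂ) ≠ 0 := ofReal_ne_zero.2 (by linarith)
  rw [cpow_add _ _ hy, cpow_natCast, ofReal_div, div_pow]
  push_cast
  ring

theorem norm_sq_sub_one_cpow_term_le (a v : ℂ) {y r : ℝ} (hy : 1 < y) (hyr : y - 1 ≤ 2 * r)
    (n : ℕ) :
    ‖2 ^ a * Ring.choose a n / 2 ^ n * (((y - 1 : ℝ) : ℂ) ^ (a + n) * v)‖ ≤
      ‖(2 : ℂ) ^ a‖ * (‖Ring.choose a n‖ * r ^ n) * ‖((y - 1 : ℝ) : ℂ) ^ a * v‖ := by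
  have hy' : ((y - 1 : ℝ) : ℂ) ≠ 0 := ofReal_ne_zero.2 (by linarith)
  calc _ = ‖(2 : ℂ) ^ a‖ * (‖Ring.choose a n‖ * ((y - 1) / 2) ^ n) *
        ‖((y - 1 : ℝ) : ℂ) ^ a * v‖ := by
        rw [cpow_add _ _ hy', cpow_natCast]
        simp only [norm_mul, norm_div, norm_pow, norm_real, norm_ofNat, div_pow,
          Real.norm_of_nonneg (by linarith : 0 ≤ y - 1)]
        ring
    _ ≤ _ := by gcongr; linarith

noncomputable def legendreSeriesTerm (μ lam w : ℂ) (n : ℕ) : ℂ :=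
  w ^ n * Gamma (lam + n + 1) * (Gamma (lam - n + 1))⁻¹ * (Gamma (1 - μ + n))⁻¹ / (n ! : ℂ)

theorem integral_sq_sub_one_cpow_term {μ lam : ℂ} (hlam : -1 < lam.re)
    (hμlam : (μ + lam).re < 0) {z : ℝ} (hz : 1 < z) (n : ℕ) :
    ∫ y in (1 : ℝ)..z, 2 ^ lam * Ring.choose lam n / 2 ^ n *
        (((y - 1 : ℝ) : ℂ) ^ (lam + n) * ((z - y : ℝ) : ℂ) ^ (-μ - lam - 1)) =
      2 ^ lam * Gamma (lam + 1) * Gamma (-μ - lam) * ((z - 1 : ℝ) : ℂ) ^ (-μ) *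
        legendreSeriesTerm μ lam (((z - 1) / 2 : ℝ) : ℂ) n := by
  have hs : 0 < (lam + n + 1).re := by
    simp only [add_re, natCast_re, one_re]
    linarith [n.cast_nonneg (α := ℝ)]
  have ht : 0 < (-μ - lam).re := by
    simp only [add_re, sub_re, neg_re] at hμlam ⊢
    linarith
  have hbeta := integral_sub_cpow_mul_sub_cpow hz hs ht
  rw [add_sub_cancel_right] at hbeta
  have hΓ : Gamma (lam + 1) ≠ 0 :=
    Gamma_ne_zero_of_re_pos (by simp only [add_re, one_re]; linarith)
  have hchoose : Ring.choose lam n = Gamma (lam + 1) / Gamma (lam - n + 1) / n ! := by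
    rw [Gamma_add_one_div_Gamma_sub_natCast_add_one hΓ,
      mul_div_cancel_left₀ _ (Nat.cast_ne_zero.2 n.factorial_ne_zero)]
  have hz' : ((z - 1 : ℝ) : ℂ) ≠ 0 := ofReal_ne_zero.2 (by linarith)
  rw [intervalIntegral.integral_const_mul, hbeta, hchoose,
    show lam + n + 1 + (-μ - lam) - 1 = -μ + n by ring,
    show lam + n + 1 + (-μ - lam) = 1 - μ + n by ring,
    cpow_add _ _ hz', cpow_natCast, legendreSeriesTerm, ofReal_div, div_pow]
  push_cast
  ring

theorem hasSum_integral_sq_sub_one_cpow_terms {μ lam : ℂ} (hlam : -1 < lam.re)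
    (hμlam : (μ + lam).re < 0) {z : ℝ} (hz1 : 1 < z) (hz3 : z < 3) :
    let F : ℕ → ℝ → ℂ := fun n y ↦ 2 ^ lam * Ring.choose lam n / 2 ^ n *
      (((y - 1 : ℝ) : ℂ) ^ (lam + n) * ((z - y : ℝ) : ℂ) ^ (-μ - lam - 1))
    Summable (fun n ↦ ‖∫ y in (1 : ℝ)..z, F n y‖) ∧
      HasSum (fun n ↦ ∫ y in (1 : ℝ)..z, F n y)
        (∫ y in (1 : ℝ)..z, ((z - y : ℝ) : ℂ) ^ (-μ - lam - 1) * ((y ^ 2 - 1 : ℝ) : ℂ) ^ lam) := by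
  intro F
  have hre : μ.re + lam.re < 0 := by simpa only [add_re] using hμlam
  have hF (n : ℕ) : IntervalIntegrable (F n) volume 1 z :=
    (intervalIntegrable_sub_cpow_mul_sub_cpow hz1
      (by simp only [add_re, natCast_re]; linarith [n.cast_nonneg (α := ℝ)])
      (by simp only [sub_re, neg_re, one_re]; linarith)).const_mul _
  have hg := (intervalIntegrable_sub_cpow_mul_sub_cpow hz1 hlam
    (t := -μ - lam - 1) (by simp only [sub_re, neg_re, one_re]; linarith)).norm
  have hc := (summable_norm_choose_mul_pow lam (r := (z - 1) / 2) (by linarith)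
    (by linarith)).mul_left ‖(2 : ℂ) ^ lam‖
  have hbound (n : ℕ) (y : ℝ) (hy : y ∈ Ioc 1 z) :=
    norm_sq_sub_one_cpow_term_le lam (((z - y : ℝ) : ℂ) ^ (-μ - lam - 1)) (r := (z - 1) / 2)
      hy.1 (by linarith [hy.2]) n
  have hlim (y : ℝ) (hy : y ∈ Ioc 1 z) :
      HasSum (F · y) (((z - y : ℝ) : ℂ) ^ (-μ - lam - 1) * ((y ^ 2 - 1 : ℝ) : ℂ) ^ lam) := by
    rw [mul_comm]
    exact ((hasSum_sq_sub_one_cpow lam hy.1 (by linarith [hy.2])).mul_right _).congr_fun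
      fun n ↦ (mul_assoc _ _ _).symm
  exact ⟨intervalIntegral.summable_norm_integral_of_norm_le_mul (F := F) hz1.le hc hg hbound,
    intervalIntegral.hasSum_integral_of_norm_le_mul hz1.le hF hc hg hbound hlim⟩

theorem fractional_integral_series_expansion (μ lam : ℂ) (hlam : -1 < lam.re)
    (hμlam : (μ + lam).re < 0) (z : ℝ) (hz1 : 1 < z) (hz3 : z < 3) :
    (Summable fun n : ℕ =>
        ‖(((z - 1) / 2 : ℝ) : ℂ) ^ n * Complex.Gamma (lam + n + 1) *
            (Complex.Gamma (lam - n + 1))⁻¹ * (Complex.Gamma (1 - μ + n))⁻¹ /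
          (n.factorial : ℂ)‖) ∧
      (∫ y in (1 : ℝ)..z, ((z - y : ℝ) : ℂ) ^ (-μ - lam - 1) * ((y ^ 2 - 1 : ℝ) : ℂ) ^ lam) =
        (2 : ℂ) ^ lam * Complex.Gamma (lam + 1) * Complex.Gamma (-μ - lam) *
            ((z - 1 : ℝ) : ℂ) ^ (-μ) *
          ∑' n : ℕ,
            (((z - 1) / 2 : ℝ) : ℂ) ^ n * Complex.Gamma (lam + n + 1) *
                (Complex.Gamma (lam - n + 1))⁻¹ * (Complex.Gamma (1 - μ + n))⁻¹ /
              (n.factorial : ℂ) := by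
  set D := (2 : ℂ) ^ lam * Gamma (lam + 1) * Gamma (-μ - lam) * ((z - 1 : ℝ) : ℂ) ^ (-μ)
  have hD : D ≠ 0 := by
    have hre : μ.re + lam.re < 0 := by simpa only [add_re] using hμlam
    refine mul_ne_zero (mul_ne_zero (mul_ne_zero ?_ ?_) ?_) ?_
    · exact cpow_ne_zero_iff.2 (.inl two_ne_zero)
    · exact Gamma_ne_zero_of_re_pos (by simp only [add_re, one_re]; linarith)
    · exact Gamma_ne_zero_of_re_pos (by simp only [sub_re, neg_re]; linarith)
    · exact cpow_ne_zero_iff.2 (.inl (ofReal_ne_zero.2 (by linarith)))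
  obtain ⟨hnorm, hsum⟩ := hasSum_integral_sq_sub_one_cpow_terms hlam hμlam hz1 hz3
  simp only [integral_sq_sub_one_cpow_term hlam hμlam hz1] at hnorm hsum
  refine ⟨(summable_mul_left_iff (norm_ne_zero_iff.2 hD)).1 (hnorm.congr fun n ↦ norm_mul _ _), ?_⟩
  rw [← hsum.tsum_eq, tsum_mul_left]
  rfl
end

section
/- Let z ≥ 1 be a real number and let c, ε be real numbers with ε > 0 and c + ε ≤ 0. Then ∫_0^∞ (z + cosh t)^{c} dt ≤ (2^ε / ε) · (z+1)^{c+ε}. -/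
open MeasureTheory Real

/-!
Split `(z + cosh t) ^ c = (z + cosh t) ^ (c + ε) * (z + cosh t) ^ (-ε)`. Since `c + ε ≤ 0` and
`z + cosh t ≥ z + 1`, the first factor is at most `(z + 1) ^ (c + ε)`; since `-ε ≤ 0` and
`z + cosh t ≥ eᵗ / 2`, the second is at most `2 ^ ε * e^{-εt}`, whose integral over `(0, ∞)` is
`2 ^ ε / ε`.
-/

lemma exp_div_two_le_add_cosh {z : ℝ} (hz : 0 ≤ z) (t : ℝ) : exp t / 2 ≤ z + cosh t := by
  rw [cosh_eq]
  linarith [exp_pos (-t)]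

lemma add_cosh_rpow_neg_le {z ε : ℝ} (hz : 0 ≤ z) (hε : 0 ≤ ε) (t : ℝ) :
    (z + cosh t) ^ (-ε) ≤ 2 ^ ε * exp (-ε * t) :=
  calc (z + cosh t) ^ (-ε) ≤ (exp t / 2) ^ (-ε) :=
        rpow_le_rpow_of_nonpos (by positivity) (exp_div_two_le_add_cosh hz t) (neg_nonpos.2 hε)
    _ = 2 ^ ε * exp (-ε * t) := by
        rw [div_rpow (exp_pos t).le zero_le_two, ← exp_mul, div_eq_mul_inv, ← rpow_neg zero_le_two,
          neg_neg, mul_comm t, mul_comm]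

lemma add_cosh_rpow_le {z c ε : ℝ} (hz : 0 ≤ z) (hε : 0 ≤ ε) (hcε : c + ε ≤ 0) (t : ℝ) :
    (z + cosh t) ^ c ≤ 2 ^ ε * (z + 1) ^ (c + ε) * exp (-ε * t) := by
  have hpos : 0 < z + cosh t := by positivity
  calc (z + cosh t) ^ c = (z + cosh t) ^ (c + ε) * (z + cosh t) ^ (-ε) := by
        rw [← rpow_add hpos, add_neg_cancel_right]
    _ ≤ (z + 1) ^ (c + ε) * (2 ^ ε * exp (-ε * t)) := by
        gcongr ?_ * ?_
        · exact rpow_le_rpow_of_nonpos (by positivity) (by linarith [one_le_cosh t]) hcε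
        · exact add_cosh_rpow_neg_le hz hε t
    _ = 2 ^ ε * (z + 1) ^ (c + ε) * exp (-ε * t) := by ring

lemma integral_exp_neg_mul_Ioi_zero {ε : ℝ} (hε : 0 < ε) :
    ∫ t in Set.Ioi (0 : ℝ), exp (-ε * t) = 1 / ε := by
  rw [integral_exp_mul_Ioi (neg_neg_iff_pos.2 hε), mul_zero, exp_zero, neg_div_neg_eq]

theorem integral_cosh_rpow_bound (z c ε : ℝ) (hz : 1 ≤ z) (hε : 0 < ε) (hcε : c + ε ≤ 0) :
    ∫ t in Set.Ioi (0 : ℝ), (z + Real.cosh t) ^ c ≤ 2 ^ ε / ε * (z + 1) ^ (c + ε) := by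
  have hz₀ : 0 ≤ z := zero_le_one.trans hz
  calc ∫ t in Set.Ioi (0 : ℝ), (z + cosh t) ^ c
      ≤ ∫ t in Set.Ioi (0 : ℝ), 2 ^ ε * (z + 1) ^ (c + ε) * exp (-ε * t) :=
        integral_mono_of_nonneg (.of_forall fun t => rpow_nonneg (by positivity) _)
          ((exp_neg_integrableOn_Ioi 0 hε).const_mul _)
          (.of_forall (add_cosh_rpow_le hz₀ hε.le hcε))
    _ = 2 ^ ε / ε * (z + 1) ^ (c + ε) := by
        rw [integral_const_mul, integral_exp_neg_mul_Ioi_zero hε]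
        ring
end

section
/- Let d ≥ 2 be an integer, n ≥ 0 an integer, and α, β real numbers with 0 < β < α < (d−1)/2, with α, β and α+β−(d−1)/2 not integers, and with (d−1)/2 + 2n < α + β. Then A_n(α,β) > 0, where A_n(α,β) = [ 1 / ( n! · 4 · π^{(d+1)/2} · Γ((d−1)/2) · Γ(α+β−(d−1)/2−2n) · Γ(α+β−2n) · Γ(d−1+2n−α−β) ) ] · Γ(α−n) Γ(β−n) Γ(α+β−n) Γ((d−1)/2−α+n) Γ((d−1)/2−β+n) Γ((d−1)/2+n) · (−1)^n Γ(n + (d−1)/2 − α − β) / Γ(2n + (d−1)/2 − α − β). -/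
/-!
With `μ = (d - 1) / 2`, the hypotheses force `2n < β < α < μ`, so every Gamma factor other than
`Γ(t) / Γ(t + n)` with `t = n + μ - α - β` has a positive argument. The functional equation gives
`Γ(t + n) = t (t + 1) ⋯ (t + n - 1) Γ(t)`, whose `n` factors are all negative since `t + n < 0`,
so their sign is exactly cancelled by `(-1)^n`. Non-integrality of `α + β - μ` keeps `Γ(t) ≠ 0`.
-/

open Finset

namespace Real

theorem Gamma_add_nat_eq_prod_mul (s : ℝ) (m : ℕ) (hs : ∀ k < m, s + k ≠ 0) :
    Gamma (s + m) = (∏ k ∈ range m, (s + k)) * Gamma s := by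
  induction m with
  | zero => simp
  | succ m ih =>
    rw [Nat.cast_succ, ← add_assoc, Gamma_add_one (hs m m.lt_succ_self),
      ih fun k hk => hs k (hk.trans m.lt_succ_self), prod_range_succ]
    ring

theorem neg_one_pow_mul_Gamma_div_Gamma_add_nat_pos (t : ℝ) (m : ℕ) (ht : Gamma t ≠ 0)
    (hneg : ∀ k < m, t + k < 0) : 0 < (-1) ^ m * Gamma t / Gamma (t + m) := by
  have hprod : (-1) ^ m * ∏ k ∈ range m, (t + k) = ∏ k ∈ range m, -(t + k) := by
    rw [prod_neg, card_range]
  have hpos : 0 < ∏ k ∈ range m, -(t + k) :=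
    prod_pos fun k hk => neg_pos.mpr (hneg k (mem_range.mp hk))
  rw [Gamma_add_nat_eq_prod_mul t m fun k hk => (hneg k hk).ne, mul_div_mul_right _ _ ht,
    ← mul_div_mul_left _ _ (pow_ne_zero m (neg_ne_zero.mpr one_ne_zero)), hprod, ← mul_pow,
    neg_one_mul, neg_neg, one_pow]
  exact one_div_pos.mpr hpos

end Real

theorem residue_coefficient_pos_general (d : ℕ) (n : ℕ) (α β : ℝ)
    (hβα : β < α) (hα : α < ((d : ℝ) - 1) / 2)
    (hαβZ : ∀ m : ℤ, α + β - ((d : ℝ) - 1) / 2 ≠ m)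
    (hn : ((d : ℝ) - 1) / 2 + 2 * n < α + β) :
    0 <
      1 / ((n.factorial : ℝ) * 4 * Real.pi ^ (((d : ℝ) + 1) / 2) *
            Real.Gamma (((d : ℝ) - 1) / 2) *
            Real.Gamma (α + β - ((d : ℝ) - 1) / 2 - 2 * n) * Real.Gamma (α + β - 2 * n) *
            Real.Gamma ((d : ℝ) - 1 + 2 * n - α - β)) *
        (Real.Gamma (α - n) * Real.Gamma (β - n) * Real.Gamma (α + β - n) *
          Real.Gamma (((d : ℝ) - 1) / 2 - α + n) * Real.Gamma (((d : ℝ) - 1) / 2 - β + n) *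
          Real.Gamma (((d : ℝ) - 1) / 2 + n)) *
        ((-1 : ℝ) ^ n * Real.Gamma (n + ((d : ℝ) - 1) / 2 - α - β) /
          Real.Gamma (2 * n + ((d : ℝ) - 1) / 2 - α - β)) := by
  have hβ : 2 * (n : ℝ) < β := by linarith
  have hn0 : (0 : ℝ) ≤ n := n.cast_nonneg
  have hsign : 0 < (-1 : ℝ) ^ n * Real.Gamma (n + ((d : ℝ) - 1) / 2 - α - β) /
      Real.Gamma (2 * n + ((d : ℝ) - 1) / 2 - α - β) := by
    have hΓ : Real.Gamma (n + ((d : ℝ) - 1) / 2 - α - β) ≠ 0 := by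
      refine Real.Gamma_ne_zero fun k hk => hαβZ (n + k) ?_
      push_cast
      linarith
    have hratio := Real.neg_one_pow_mul_Gamma_div_Gamma_add_nat_pos _ n hΓ fun k hk => by
      have : (k : ℝ) < n := by exact_mod_cast hk
      linarith
    convert hratio using 3
    ring
  refine mul_pos (mul_pos (one_div_pos.mpr ?_) ?_) hsign <;>
    apply_rules [Real.rpow_pos_of_pos Real.pi_pos, mul_pos, Real.Gamma_pos_of_pos,
      Nat.cast_pos.mpr n.factorial_pos] <;>
    linarith

theorem residue_coefficient_pos (d : ℕ) (hd : 2 ≤ d) (n : ℕ) (α β : ℝ)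
    (hβ : 0 < β) (hβα : β < α) (hα : α < ((d : ℝ) - 1) / 2)
    (hαZ : ∀ m : ℤ, α ≠ m) (hβZ : ∀ m : ℤ, β ≠ m)
    (hαβZ : ∀ m : ℤ, α + β - ((d : ℝ) - 1) / 2 ≠ m)
    (hn : ((d : ℝ) - 1) / 2 + 2 * n < α + β) :
    0 <
      1 / ((n.factorial : ℝ) * 4 * Real.pi ^ (((d : ℝ) + 1) / 2) *
            Real.Gamma (((d : ℝ) - 1) / 2) *
            Real.Gamma (α + β - ((d : ℝ) - 1) / 2 - 2 * n) * Real.Gamma (α + β - 2 * n) *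
            Real.Gamma ((d : ℝ) - 1 + 2 * n - α - β)) *
        (Real.Gamma (α - n) * Real.Gamma (β - n) * Real.Gamma (α + β - n) *
          Real.Gamma (((d : ℝ) - 1) / 2 - α + n) * Real.Gamma (((d : ℝ) - 1) / 2 - β + n) *
          Real.Gamma (((d : ℝ) - 1) / 2 + n)) *
        ((-1 : ℝ) ^ n * Real.Gamma (n + ((d : ℝ) - 1) / 2 - α - β) /
          Real.Gamma (2 * n + ((d : ℝ) - 1) / 2 - α - β)) :=
  residue_coefficient_pos_general d n α β hβα hα hαβZ hn
end

section
/- Let v > 0 and let ν be a nonzero real number. Then ∫_1^{cosh v} (cosh v − y)^{−iν} (y²−1)^{−1/2+iν} dy = 2^{iν} Γ(1/2+iν) Γ(1−iν) · sin(νv) / (√π · ν). -/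
/-!
Write `E = exp v`, so that `cosh v = (E + E⁻¹) / 2 =: C`, and `a = iν`. For `1 < y < C` the
function `D(c) = y² - 1 + 2c(C - y)` is affine in `c` with `D(E⁻¹) = (y - E⁻¹)²` and
`D(E) = (E - y)²`, hence `∫_{E⁻¹}^{E} (E - y)(y - E⁻¹) D(c)^{-3/2} dc = 2`. Inserting this factor
turns the integral into a double integral. For fixed `c`, the substitution `u = (y² - 1) / D(c)`
maps `(1, C)` increasingly onto `(0, 1)` and satisfies `1 - u = 2c(C - y) / D(c)`, which turns the
`y`-integral into `2^(a-1) c^(a-1) B(a + 1/2, 1 - a)`. Since `Re a = 0` the double integral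
converges absolutely, so Fubini applies, and what remains is
`∫_{E⁻¹}^{E} c^(a-1) dc = (E^a - E^(-a)) / a = 2 sin(νv) / ν` and
`B(a + 1/2, 1 - a) = 2 Γ(a + 1/2) Γ(1 - a) / √π`.
-/

open MeasureTheory Set

lemma inv_lt_self_of_one_lt {x : ℝ} (hx : 1 < x) : x⁻¹ < x :=
  (inv_lt_one_of_one_lt₀ hx).trans hx

lemma Complex.ofReal_cpow_eq_exp {x : ℝ} (hx : 0 < x) (w : ℂ) :
    (x : ℂ) ^ w = Complex.exp (w * Real.log x) := by
  rw [Complex.cpow_def_of_ne_zero (by exact_mod_cast hx.ne'), Complex.ofReal_log hx.le, mul_comm]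

lemma Complex.ofReal_eq_exp_log {x : ℝ} (hx : 0 < x) : (x : ℂ) = Complex.exp (Real.log x) := by
  rw [← Complex.ofReal_exp, Real.exp_log hx]

lemma integral_ofReal_cpow_sub_one {a : ℂ} (ha : a ≠ 0) {p q : ℝ} (hp : 0 < p) (hq : 0 < q) :
    ∫ c in p..q, (c : ℂ) ^ (a - 1) = ((q : ℂ) ^ a - (p : ℂ) ^ a) / a := by
  rw [integral_cpow (Or.inr ⟨fun h ↦ ha (by simpa using h), notMem_uIcc_of_lt hp hq⟩),
    sub_add_cancel]

lemma integrableOn_sq_sub_one_rpow_neg_half (b : ℝ) :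
    IntegrableOn (fun y : ℝ ↦ (y ^ 2 - 1) ^ (-(1 / 2) : ℝ)) (Ioo 1 b) := by
  have hshift : IntegrableOn (fun y : ℝ ↦ (y - 1) ^ (-(1 / 2) : ℝ)) (Ioo 1 b) := by
    rcases le_or_gt b 1 with hb | hb
    · simp [Ioo_eq_empty_of_le hb]
    have h := (intervalIntegral.intervalIntegrable_rpow' (a := 0) (b := b - 1)
      (r := -(1 / 2)) (by norm_num)).comp_sub_right 1
    rwa [zero_add, sub_add_cancel, intervalIntegrable_iff_integrableOn_Ioo_of_le hb.le] at h
  refine hshift.mono' (Measurable.aestronglyMeasurable (by fun_prop))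
    ((ae_restrict_mem measurableSet_Ioo).mono fun y hy ↦ ?_)
  have h1 : 0 < y - 1 := sub_pos.2 hy.1
  have hY : 0 < y ^ 2 - 1 := by nlinarith
  rw [Real.norm_of_nonneg (by positivity)]
  exact Real.rpow_le_rpow_of_nonpos h1 (by nlinarith) (by norm_num)

lemma Complex.Gamma_three_div_two : Complex.Gamma (3 / 2) = Real.sqrt Real.pi / 2 := by
  rw [show (3 / 2 : ℂ) = 1 / 2 + 1 by norm_num, Complex.Gamma_add_one _ (by norm_num),
    Complex.Gamma_one_half_eq, Real.sqrt_eq_rpow, Complex.ofReal_cpow Real.pi_pos.le]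
  push_cast
  ring

lemma Complex.betaIntegral_eq_Gamma_mul_Gamma_div {u v : ℂ} (hu : 0 < u.re) (hv : 0 < v.re) :
    Complex.betaIntegral u v = Complex.Gamma u * Complex.Gamma v / Complex.Gamma (u + v) := by
  rw [Complex.Gamma_mul_Gamma_eq_betaIntegral hu hv, mul_div_cancel_left₀]
  exact Complex.Gamma_ne_zero_of_re_pos (by rw [Complex.add_re]; positivity)

noncomputable section

namespace LegendreThreeDim

def mid (E : ℝ) : ℝ := (E + E⁻¹) / 2

def quad (E y : ℝ) : ℝ := (E - y) * (y - E⁻¹)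

def den (E c y : ℝ) : ℝ := y ^ 2 - 1 + 2 * c * (mid E - y)

def ratio (E c y : ℝ) : ℝ := (y ^ 2 - 1) / den E c y

def legendreIntegrand (a : ℂ) (E y : ℝ) : ℂ :=
  ((mid E - y : ℝ) : ℂ) ^ (-a) * ((y ^ 2 - 1 : ℝ) : ℂ) ^ (a - 1 / 2)

def kernel (a : ℂ) (E y c : ℝ) : ℂ :=
  legendreIntegrand a E y * ((quad E y * den E c y ^ (-(3 / 2) : ℝ) : ℝ) : ℂ)

def betaIntegrand (u v : ℂ) (t : ℝ) : ℂ := (t : ℂ) ^ (u - 1) * (1 - (t : ℂ)) ^ (v - 1)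

variable {E c y : ℝ}

lemma one_lt_mid (hE : 1 < E) : 1 < mid E := by
  have hE0 : 0 < E := by linarith
  have : 0 < (E - 1) ^ 2 / E := by positivity
  have h : mid E - 1 = (E - 1) ^ 2 / E / 2 := by
    unfold mid; field_simp; ring
  linarith

lemma mid_lt_self (hE : 1 < E) : mid E < E := by
  have := inv_lt_self_of_one_lt hE
  unfold mid; linarith

lemma quad_eq_mid (hE : E ≠ 0) (y : ℝ) : quad E y = 2 * mid E * y - y ^ 2 - 1 := by
  unfold quad mid; field_simp; ring

lemma quad_pos (hE : 1 < E) (h1 : 1 ≤ y) (h2 : y < E) : 0 < quad E y :=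
  mul_pos (by linarith) (by linarith [inv_lt_one_of_one_lt₀ hE])

lemma den_inv (hE : E ≠ 0) (y : ℝ) : den E E⁻¹ y = (y - E⁻¹) ^ 2 := by
  unfold den mid; field_simp; ring

lemma den_self (hE : E ≠ 0) (y : ℝ) : den E E y = (E - y) ^ 2 := by
  unfold den mid; field_simp; ring

lemma den_pos (hE : 1 < E) (hc : 0 < c) (h1 : 1 ≤ y) (h2 : y ≤ mid E) : 0 < den E c y := by
  have := one_lt_mid hE
  unfold den
  rcases h1.eq_or_lt with rfl | h1 <;> nlinarith

lemma pos_of_mem_uIcc_inv (hE : 1 < E) (hc : c ∈ uIcc E⁻¹ E) : 0 < c :=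
  (lt_inf_iff.2 ⟨inv_pos.2 (zero_lt_one.trans hE), zero_lt_one.trans hE⟩).trans_le hc.1

lemma continuousOn_quad_mul_den_rpow (hE : 1 < E) (h1 : 1 ≤ y) (h2 : y ≤ mid E) (p : ℝ) :
    ContinuousOn (fun c ↦ quad E y * den E c y ^ p) (Icc E⁻¹ E) :=
  continuousOn_const.mul <| ContinuousOn.rpow_const (by unfold den; fun_prop) fun _ hc ↦
    Or.inl (den_pos hE (pos_of_mem_uIcc_inv hE (Icc_subset_uIcc hc)) h1 h2).ne'

lemma integral_quad_mul_den_rpow (hE : 1 < E) (h1 : 1 < y) (h2 : y < mid E) :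
    ∫ c in E⁻¹..E, quad E y * den E c y ^ (-(3 / 2) : ℝ) = 2 := by
  have hE0 : E ≠ 0 := (zero_lt_one.trans hE).ne'
  have hmid : 0 < mid E - y := sub_pos.2 h2
  have hEy : 0 < E - y := by linarith [mid_lt_self hE]
  have hyE : 0 < y - E⁻¹ := by linarith [inv_lt_one_of_one_lt₀ hE]
  have hderiv : ∀ c ∈ uIcc E⁻¹ E, HasDerivAt (fun c ↦ -(quad E y / (mid E - y)) *
      den E c y ^ (-(1 / 2) : ℝ)) (quad E y * den E c y ^ (-(3 / 2) : ℝ)) c := by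
    intro c hc
    have hlin : HasDerivAt (fun c ↦ den E c y) (2 * (mid E - y)) c := by
      unfold den
      simpa using ((hasDerivAt_id c).const_mul 2 |>.mul_const (mid E - y)).const_add (y ^ 2 - 1)
    have hD := den_pos hE (pos_of_mem_uIcc_inv hE hc) h1.le h2.le
    refine ((hlin.rpow_const (Or.inl hD.ne')).const_mul _).congr_deriv ?_
    rw [show (-(1 / 2) : ℝ) - 1 = -(3 / 2) by norm_num]
    field_simp
  have hsqrt : ∀ {t : ℝ}, 0 < t → (t ^ 2) ^ (-(1 / 2) : ℝ) = t⁻¹ := fun ht ↦ by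
    rw [← Real.rpow_natCast, ← Real.rpow_mul ht.le]; norm_num [Real.rpow_neg_one]
  rw [intervalIntegral.integral_eq_sub_of_hasDerivAt hderiv
      ((continuousOn_quad_mul_den_rpow hE h1.le h2.le _).intervalIntegrable_of_Icc
        (inv_lt_self_of_one_lt hE).le),
    den_self hE0, den_inv hE0, hsqrt hEy, hsqrt hyE]
  calc -(quad E y / (mid E - y)) * (E - y)⁻¹ - -(quad E y / (mid E - y)) * (y - E⁻¹)⁻¹
      = (quad E y * (y - E⁻¹)⁻¹ - quad E y * (E - y)⁻¹) / (mid E - y) := by ring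
    _ = ((E - y) - (y - E⁻¹)) / (mid E - y) := by
      rw [quad, mul_inv_cancel_right₀ hyE.ne', mul_comm, ← mul_assoc, inv_mul_cancel₀ hEy.ne',
        one_mul]
    _ = 2 := by rw [div_eq_iff hmid.ne']; unfold mid; ring

lemma integral_kernel_left (a : ℂ) (hE : 1 < E) (h1 : 1 < y) (h2 : y < mid E) :
    ∫ c in E⁻¹..E, kernel a E y c = 2 * legendreIntegrand a E y := by
  simp only [kernel]
  rw [intervalIntegral.integral_const_mul, intervalIntegral.integral_ofReal,
    integral_quad_mul_den_rpow hE h1 h2]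
  push_cast
  ring

lemma one_sub_ratio (hE : 1 < E) (hc : 0 < c) (h1 : 1 ≤ y) (h2 : y ≤ mid E) :
    1 - ratio E c y = 2 * c * (mid E - y) / den E c y := by
  have := (den_pos hE hc h1 h2).ne'
  unfold ratio; field_simp; unfold den; ring

lemma ratio_one (E c : ℝ) : ratio E c 1 = 0 := by simp [ratio]

lemma ratio_mid (hE : 1 < E) (c : ℝ) : ratio E c (mid E) = 1 := by
  have := one_lt_mid hE
  have : mid E ^ 2 - 1 ≠ 0 := by nlinarith
  simp [ratio, den, this]

lemma continuousOn_ratio (hE : 1 < E) (hc : 0 < c) : ContinuousOn (ratio E c) (Icc 1 (mid E)) :=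
  ContinuousOn.div (by fun_prop) (by unfold den; fun_prop)
    fun _ hy ↦ (den_pos hE hc hy.1 hy.2).ne'

lemma hasDerivAt_ratio (hE : 1 < E) (hc : 0 < c) (h1 : 1 ≤ y) (h2 : y ≤ mid E) :
    HasDerivAt (ratio E c) (2 * c * quad E y / den E c y ^ 2) y := by
  have hD := (den_pos hE hc h1 h2).ne'
  have hden : HasDerivAt (den E c) (2 * y - 2 * c) y := by
    refine (((hasDerivAt_pow 2 y).sub_const 1).add
      (((hasDerivAt_id y).const_sub (mid E)).const_mul (2 * c))).congr_deriv ?_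
    simp only [Nat.cast_ofNat]; ring
  refine (((hasDerivAt_pow 2 y).sub_const 1).div hden hD).congr_deriv ?_
  rw [quad_eq_mid (zero_lt_one.trans hE).ne']
  field_simp; unfold den; ring

lemma log_ratio (hE : 1 < E) (hc : 0 < c) (h1 : 1 < y) (h2 : y ≤ mid E) :
    Real.log (ratio E c y) = Real.log (y ^ 2 - 1) - Real.log (den E c y) :=
  Real.log_div (by nlinarith) (den_pos hE hc h1.le h2).ne'

lemma log_one_sub_ratio (hE : 1 < E) (hc : 0 < c) (h1 : 1 ≤ y) (h2 : y < mid E) :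
    Real.log (1 - ratio E c y) =
      Real.log 2 + Real.log c + Real.log (mid E - y) - Real.log (den E c y) := by
  have hmid : 0 < mid E - y := sub_pos.2 h2
  rw [one_sub_ratio hE hc h1 h2.le, Real.log_div (by positivity) (den_pos hE hc h1 h2.le).ne',
    Real.log_mul (by positivity) hmid.ne', Real.log_mul two_ne_zero hc.ne']

lemma kernel_eq_smul_betaIntegrand (a : ℂ) (hE : 1 < E) (hc : 0 < c) (h1 : 1 < y)
    (h2 : y < mid E) :
    kernel a E y c = 2 ^ (a - 1) * (c : ℂ) ^ (a - 1) *
      ((2 * c * quad E y / den E c y ^ 2) • betaIntegrand (a + 1 / 2) (1 - a) (ratio E c y)) := by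
  have hmid : 0 < mid E - y := sub_pos.2 h2
  have hY : 0 < y ^ 2 - 1 := by nlinarith
  have hQ := quad_pos hE h1.le (h2.trans (mid_lt_self hE))
  have hD := den_pos hE hc h1.le h2.le
  have hu : 0 < ratio E c y := div_pos hY hD
  have h1u : 0 < 1 - ratio E c y := by rw [one_sub_ratio hE hc h1.le h2.le]; positivity
  have hQD : 0 < quad E y * den E c y ^ (-(3 / 2) : ℝ) := by positivity
  have hdu : 0 < 2 * c * quad E y / den E c y ^ 2 := by positivity
  have hlog_QD : Real.log (quad E y * den E c y ^ (-(3 / 2) : ℝ)) =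
      Real.log (quad E y) - 3 / 2 * Real.log (den E c y) := by
    rw [Real.log_mul hQ.ne' (by positivity), Real.log_rpow hD]; ring
  have hlog_du : Real.log (2 * c * quad E y / den E c y ^ 2) =
      Real.log 2 + Real.log c + Real.log (quad E y) - 2 * Real.log (den E c y) := by
    rw [Real.log_div (by positivity) (by positivity), Real.log_mul (by positivity) hQ.ne',
      Real.log_mul two_ne_zero hc.ne', Real.log_pow]; push_cast; ring
  -- every factor is a power of a positive real, so this is an identity between exponents
  rw [kernel, legendreIntegrand, betaIntegrand, Complex.real_smul,
    show (1 : ℂ) - (ratio E c y : ℂ) = ((1 - ratio E c y : ℝ) : ℂ) by push_cast; ring,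
    show (2 : ℂ) ^ (a - 1) = ((2 : ℝ) : ℂ) ^ (a - 1) by norm_num,
    Complex.ofReal_cpow_eq_exp hmid, Complex.ofReal_cpow_eq_exp hY, Complex.ofReal_eq_exp_log hQD,
    Complex.ofReal_cpow_eq_exp two_pos, Complex.ofReal_cpow_eq_exp hc,
    Complex.ofReal_eq_exp_log hdu, Complex.ofReal_cpow_eq_exp hu, Complex.ofReal_cpow_eq_exp h1u,
    log_ratio hE hc h1 h2.le, log_one_sub_ratio hE hc h1.le h2, hlog_QD, hlog_du]
  simp only [← Complex.exp_add]
  congr 1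
  push_cast
  ring

lemma integral_kernel_right (a : ℂ) (hE : 1 < E) (hc : 0 < c) :
    ∫ y in 1..mid E, kernel a E y c =
      2 ^ (a - 1) * (c : ℂ) ^ (a - 1) * Complex.betaIntegral (a + 1 / 2) (1 - a) := by
  have hmid := one_lt_mid hE
  have hderiv_nonneg : ∀ y ∈ Ioo 1 (mid E), 0 ≤ 2 * c * quad E y / den E c y ^ 2 := fun y hy ↦ by
    have := quad_pos hE hy.1.le (hy.2.trans (mid_lt_self hE))
    positivity
  rw [intervalIntegral.integral_of_le hmid.le, integral_Ioc_eq_integral_Ioo,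
    setIntegral_congr_fun measurableSet_Ioo
      fun y hy ↦ kernel_eq_smul_betaIntegrand a hE hc hy.1 hy.2,
    integral_const_mul, ← integral_Icc_eq_integral_Ioo,
    integral_Icc_deriv_smul_of_deriv_nonneg (continuousOn_ratio hE hc)
      (fun y hy ↦ hasDerivAt_ratio hE hc hy.1.le hy.2.le) hderiv_nonneg hmid.le,
    ratio_one, ratio_mid hE, Complex.betaIntegral, intervalIntegral.integral_of_le zero_le_one,
    integral_Icc_eq_integral_Ioc]
  rfl

lemma measurable_kernel (a : ℂ) (E : ℝ) : Measurable (Function.uncurry (kernel a E)) := by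
  unfold kernel legendreIntegrand quad den Function.uncurry
  fun_prop

lemma norm_kernel {a : ℂ} (ha : a.re = 0) (hE : 1 < E) (hc : 0 < c) (h1 : 1 < y)
    (h2 : y < mid E) :
    ‖kernel a E y c‖ = (y ^ 2 - 1) ^ (-(1 / 2) : ℝ) * (quad E y * den E c y ^ (-(3 / 2) : ℝ)) := by
  have hY : 0 < y ^ 2 - 1 := by nlinarith
  have := quad_pos hE h1.le (h2.trans (mid_lt_self hE))
  have := den_pos hE hc h1.le h2.le
  rw [kernel, legendreIntegrand, norm_mul, norm_mul,
    Complex.norm_cpow_eq_rpow_re_of_pos (sub_pos.2 h2), Complex.norm_cpow_eq_rpow_re_of_pos hY,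
    Complex.norm_real, Real.norm_of_nonneg (by positivity)]
  simp [ha]

lemma integrableOn_kernel {a : ℂ} (ha : a.re = 0) (hE : 1 < E) :
    IntegrableOn (Function.uncurry (kernel a E)) (Ioc 1 (mid E) ×ˢ Ioc E⁻¹ E) := by
  rw [IntegrableOn, Measure.volume_eq_prod, ← Measure.prod_restrict,
    ← Measure.restrict_congr_set (Ioo_ae_eq_Ioc (a := (1 : ℝ)) (b := mid E)),
    integrable_prod_iff (measurable_kernel a E).aestronglyMeasurable]
  constructor
  · filter_upwards [ae_restrict_mem measurableSet_Ioo] with y hy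
    refine (ContinuousOn.integrableOn_Icc ?_).mono_set Ioc_subset_Icc_self
    simp only [Function.uncurry_apply_pair, kernel]
    exact continuousOn_const.fun_mul (Complex.continuous_ofReal.comp_continuousOn
      (continuousOn_quad_mul_den_rpow hE hy.1.le hy.2.le _))
  · refine ((integrableOn_sq_sub_one_rpow_neg_half (mid E)).const_mul 2).congr ?_
    filter_upwards [ae_restrict_mem measurableSet_Ioo] with y hy
    simp only [Function.uncurry_apply_pair]
    rw [← intervalIntegral.integral_of_le (inv_lt_self_of_one_lt hE).le,
      intervalIntegral.integral_congr
        fun c hc ↦ norm_kernel ha hE (pos_of_mem_uIcc_inv hE hc) hy.1 hy.2,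
      intervalIntegral.integral_const_mul, integral_quad_mul_den_rpow hE hy.1 hy.2, mul_comm]

lemma two_mul_integral_legendreIntegrand {a : ℂ} (ha : a.re = 0) (hE : 1 < E) :
    2 * ∫ y in 1..mid E, legendreIntegrand a E y =
      2 ^ (a - 1) * Complex.betaIntegral (a + 1 / 2) (1 - a) *
        ∫ c in E⁻¹..E, (c : ℂ) ^ (a - 1) := by
  have hmid := one_lt_mid hE
  calc 2 * ∫ y in 1..mid E, legendreIntegrand a E y
      = ∫ y in 1..mid E, ∫ c in E⁻¹..E, kernel a E y c := by
        simp only [intervalIntegral.integral_of_le hmid.le, integral_Ioc_eq_integral_Ioo,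
          ← integral_const_mul]
        exact setIntegral_congr_fun measurableSet_Ioo fun y hy ↦
          (integral_kernel_left a hE hy.1 hy.2).symm
    _ = ∫ c in E⁻¹..E, ∫ y in 1..mid E, kernel a E y c := by
        apply intervalIntegral_intervalIntegral_swap
        rw [uIoc_of_le hmid.le, uIoc_of_le (inv_lt_self_of_one_lt hE).le]
        exact integrableOn_kernel ha hE
    _ = ∫ c in E⁻¹..E, 2 ^ (a - 1) * Complex.betaIntegral (a + 1 / 2) (1 - a) * (c : ℂ) ^ (a - 1) :=
        intervalIntegral.integral_congr fun c hc ↦ by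
          rw [integral_kernel_right a hE (pos_of_mem_uIcc_inv hE hc)]; ring
    _ = _ := intervalIntegral.integral_const_mul _ _

lemma integral_legendreIntegrand {a : ℂ} (ha : a.re = 0) (ha₀ : a ≠ 0) (hE : 1 < E) :
    ∫ y in 1..mid E, legendreIntegrand a E y =
      2 ^ a * Complex.Gamma (1 / 2 + a) * Complex.Gamma (1 - a) *
        ((E : ℂ) ^ a - ((E⁻¹ : ℝ) : ℂ) ^ a) / (2 * Real.sqrt Real.pi * a) := by
  have h := two_mul_integral_legendreIntegrand ha hE
  rw [integral_ofReal_cpow_sub_one ha₀ (inv_pos.2 (zero_lt_one.trans hE)) (zero_lt_one.trans hE),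
    Complex.betaIntegral_eq_Gamma_mul_Gamma_div (by simp [ha]) (by simp [ha]),
    show a + 1 / 2 + (1 - a) = 3 / 2 by ring, Complex.Gamma_three_div_two,
    Complex.cpow_sub _ _ two_ne_zero, Complex.cpow_one, add_comm a] at h
  have : (Real.sqrt Real.pi : ℂ) ≠ 0 := by exact_mod_cast (Real.sqrt_pos.2 Real.pi_pos).ne'
  generalize Complex.Gamma (1 / 2 + a) = g₁ at h ⊢
  field_simp at h ⊢
  exact h

end LegendreThreeDim

end

open LegendreThreeDim in
theorem legendre_fractional_integral_three_dim (v : ℝ) (hv : 0 < v) (ν : ℝ) (hν : ν ≠ 0) :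
    ∫ y in (1 : ℝ)..Real.cosh v,
        ((Real.cosh v - y : ℝ) : ℂ) ^ (-(Complex.I * ν)) *
          ((y ^ 2 - 1 : ℝ) : ℂ) ^ (-(1 / 2 : ℂ) + Complex.I * ν) =
      (2 : ℂ) ^ (Complex.I * ν) * Complex.Gamma (1 / 2 + Complex.I * ν) *
          Complex.Gamma (1 - Complex.I * ν) *
        ((Real.sin (ν * v) : ℝ) : ℂ) / ((Real.sqrt Real.pi : ℝ) * (ν : ℂ)) := by
  have hcosh : Real.cosh v = mid (Real.exp v) := by rw [mid, Real.cosh_eq, Real.exp_neg]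
  have hpow (t : ℝ) :
      ((Real.exp t : ℝ) : ℂ) ^ (Complex.I * ν) = Complex.exp ((ν * t : ℝ) * Complex.I) := by
    rw [Complex.ofReal_cpow_eq_exp (Real.exp_pos t), Real.log_exp]
    congr 1
    push_cast
    ring
  rw [hcosh, show -(1 / 2 : ℂ) + Complex.I * ν = Complex.I * ν - 1 / 2 by ring]
  change ∫ y in (1 : ℝ)..mid (Real.exp v), legendreIntegrand (Complex.I * ν) (Real.exp v) y = _
  rw [integral_legendreIntegrand (by simp) (mul_ne_zero Complex.I_ne_zero (by exact_mod_cast hν))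
      (Real.one_lt_exp_iff.2 hv), ← Real.exp_neg, hpow, hpow, Complex.exp_mul_I, Complex.exp_mul_I]
  push_cast
  simp only [mul_neg, Complex.cos_neg, Complex.sin_neg]
  have : (Real.sqrt Real.pi : ℂ) ≠ 0 := by exact_mod_cast (Real.sqrt_pos.2 Real.pi_pos).ne'
  field_simp
  ring
end
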